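/- arXiv:0707.2662 — 4 statements merged into one kernel-verified Lean document; each statement's English description precedes it below -/
import Mathlib

section
/- Let v be a positive integer, let x be an integer, and let O : ℕ → ℤ be a function such that O(l) = 0 unless l is a divisor of v with l < v. Define c : ℕ → ℤ on positive integers by c(d) = x if v divides d, and c(d) = ∑_{l ∣ d} l·O(l) otherwise. Then for every positive integer k, ∑_{d ∣ k} μ(k/d)·c(d) = k·O(k) + (x − ∑_{l ∣ v} l·O(l)) if k = v, and ∑_{d ∣ k} μ(k/d)·c(d) = k·O(k) if k ≠ v. -/
open Finset ArithmeticFunction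

/-! The values `c d` are the divisor sums `∑_{l ∣ d} F l` of the single function
`F l = l·O(l) + [l = v]·(x − ∑_{l ∣ v} l·O(l))`: for `v ∤ d` the correction term does not occur,
and for `v ∣ d` the sum `∑_{l ∣ d} l·O(l)` equals `∑_{l ∣ v} l·O(l)` because `O` is supported on
divisors of `v`. Möbius inversion then returns `F k`. -/

theorem Nat.sum_divisors_eq_sum_divisors_of_dvd {M : Type*} [AddCommMonoid M] {f : ℕ → M}
    {v d : ℕ} (hf : ∀ l, ¬ l ∣ v → f l = 0) (hvd : v ∣ d) (hd : d ≠ 0) :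
    ∑ l ∈ d.divisors, f l = ∑ l ∈ v.divisors, f l := by
  have hv : v ≠ 0 := ne_zero_of_dvd_ne_zero hd hvd
  refine (sum_subset (Nat.divisors_subset_of_dvd hd hvd) fun l _ hl => hf l ?_).symm
  exact fun hlv => hl (Nat.mem_divisors.2 ⟨hlv, hv⟩)

theorem ArithmeticFunction.sum_divisors_moebius_div_mul_sum_divisors {R : Type*} [NonAssocRing R]
    (f : ℕ → R) {k : ℕ} (hk : 0 < k) :
    ∑ d ∈ k.divisors, (moebius (k / d) : R) * ∑ l ∈ d.divisors, f l = f k := by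
  rw [← Nat.sum_divisorsAntidiagonal' fun a b => (moebius a : R) * ∑ l ∈ b.divisors, f l]
  exact sum_eq_iff_sum_mul_moebius_eq.mp (fun _ _ => rfl) k hk

theorem moebius_sum_character_exponent_general
    (v : ℕ) (x : ℤ) (O : ℕ → ℤ)
    (hO : ∀ l : ℕ, ¬ (l ∣ v ∧ l < v) → O l = 0)
    (c : ℕ → ℤ)
    (hc_div : ∀ d : ℕ, 0 < d → v ∣ d → c d = x)
    (hc_ndiv : ∀ d : ℕ, 0 < d → ¬ v ∣ d → c d = ∑ l ∈ d.divisors, (l : ℤ) * O l)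
    (k : ℕ) (hk : 0 < k) :
    ∑ d ∈ k.divisors, (moebius (k / d) : ℤ) * c d =
      if k = v then (k : ℤ) * O k + (x - ∑ l ∈ v.divisors, (l : ℤ) * O l)
      else (k : ℤ) * O k := by
  set G := ∑ l ∈ v.divisors, (l : ℤ) * O l
  have hc : ∀ d ∈ k.divisors,
      c d = ∑ l ∈ d.divisors, ((l : ℤ) * O l + if l = v then x - G else 0) := by
    intro d hd
    have hd0 : 0 < d := Nat.pos_of_mem_divisors hd
    rw [sum_add_distrib, sum_ite_eq']
    by_cases hvd : v ∣ d
    · rw [hc_div d hd0 hvd, if_pos (Nat.mem_divisors.2 ⟨hvd, hd0.ne'⟩),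
        Nat.sum_divisors_eq_sum_divisors_of_dvd (fun l hl => by rw [hO l (hl ·.1), mul_zero]) hvd
          hd0.ne']
      ring
    · rw [hc_ndiv d hd0 hvd, if_neg fun h => hvd (Nat.mem_divisors.1 h).1, add_zero]
  rw [sum_congr rfl fun d hd => by rw [hc d hd]]
  refine (sum_divisors_moebius_div_mul_sum_divisors (R := ℤ) _ hk).trans ?_
  split_ifs <;> simp

/-- Möbius-sum computation of the exponents in the character ξ(g)
in the proof of Theorem 1. -/
theorem moebius_sum_character_exponent
    (v : ℕ) (hv : 0 < v) (x : ℤ) (O : ℕ → ℤ)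
    (hO : ∀ l : ℕ, ¬ (l ∣ v ∧ l < v) → O l = 0)
    (c : ℕ → ℤ)
    (hc_div : ∀ d : ℕ, 0 < d → v ∣ d → c d = x)
    (hc_ndiv : ∀ d : ℕ, 0 < d → ¬ v ∣ d → c d = ∑ l ∈ d.divisors, (l : ℤ) * O l)
    (k : ℕ) (hk : 0 < k) :
    ∑ d ∈ k.divisors, (moebius (k / d) : ℤ) * c d =
      if k = v then (k : ℤ) * O k + (x - ∑ l ∈ v.divisors, (l : ℤ) * O l)
      else (k : ℤ) * O k :=
  moebius_sum_character_exponent_general v x O hO c hc_div hc_ndiv k hk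
end

section
/- Let n be a positive integer and define U : ℕ → ℤ by U(d) = 1 if d = n, U(d) = −1 if n = 2d, and U(d) = 0 otherwise. Then for every positive divisor m of n, ∑_{k ∣ m} k·U(n/k) = (−1)^{m−1}. -/
/-! For k ∣ n the term k·U(n/k) is 1 at k = 1, −2 at k = 2 and 0 otherwise, so the sum over
the divisors of m is 1 − 2·[2 ∣ m], which is (−1)^(m−1). -/

open Finset

theorem Nat.eq_two_mul_div_iff {n k : ℕ} (hn : 0 < n) (hk : k ∣ n) :
    n = 2 * (n / k) ↔ k = 2 := by
  obtain ⟨q, rfl⟩ := hk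
  have hq : q ≠ 0 := right_ne_zero_of_mul hn.ne'
  rw [Nat.mul_div_cancel_left q (Nat.pos_of_ne_zero (left_ne_zero_of_mul hn.ne'))]
  exact Nat.mul_left_inj hq

theorem neg_one_pow_pred_eq_one_sub {m : ℕ} (hm : m ≠ 0) :
    (-1 : ℤ) ^ (m - 1) = 1 - if 2 ∣ m then 2 else 0 := by
  rcases Nat.even_or_odd m with he | ho
  · rw [if_pos he.two_dvd, (Nat.Even.sub_odd (Nat.pos_of_ne_zero hm) he odd_one).neg_one_pow]
    norm_num
  · rw [if_neg (Nat.not_even_iff_odd.mpr ho ∘ even_iff_two_dvd.mpr),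
      (Nat.Odd.sub_odd ho odd_one).neg_one_pow]
    norm_num

theorem sum_divisors_indicator_one_sub_two {m : ℕ} (hm : m ≠ 0) :
    ∑ k ∈ m.divisors, ((if k = 1 then 1 else 0) - if k = 2 then 2 else 0 : ℤ) =
      (-1) ^ (m - 1) := by
  rw [sum_sub_distrib, sum_ite_eq', sum_ite_eq', neg_one_pow_pred_eq_one_sub hm]
  simp [hm]

theorem mul_apply_div_of_dvd {n k : ℕ} (hn : 0 < n) (hk : k ∣ n) {U : ℕ → ℤ}
    (hU : ∀ d : ℕ, U d = if d = n then 1 else if n = 2 * d then -1 else 0) :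
    (k : ℤ) * U (n / k) = (if k = 1 then 1 else 0) - if k = 2 then 2 else 0 := by
  simp only [hU, Nat.div_eq_self, Nat.eq_two_mul_div_iff hn hk, hn.ne', false_or]
  split_ifs <;> simp_all

theorem explicit_solution_of_stratum_system_general
    (n : ℕ) (hn : 0 < n) (U : ℕ → ℤ)
    (hU : ∀ d : ℕ, U d = if d = n then 1 else if n = 2 * d then -1 else 0)
    (m : ℕ) (hm : m ∣ n) :
    ∑ k ∈ m.divisors, (k : ℤ) * U (n / k) = (-1) ^ (m - 1) := by
  rw [← sum_divisors_indicator_one_sub_two (ne_zero_of_dvd_ne_zero hn.ne' hm)]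
  exact sum_congr rfl fun k hk =>
    mul_apply_div_of_dvd hn ((Nat.dvd_of_mem_divisors hk).trans hm) hU

/-- the explicit function U (U(n) = 1, U(n/2) = −1 when n = 2d, else 0)
solves the system ∑_{k ∣ m} k·U(n/k) = (−1)^{m−1} for every positive divisor m of n. -/
theorem explicit_solution_of_stratum_system
    (n : ℕ) (hn : 0 < n) (U : ℕ → ℤ)
    (hU : ∀ d : ℕ, U d = if d = n then 1 else if n = 2 * d then -1 else 0)
    (m : ℕ) (hm : m ∣ n) (hm0 : 0 < m) :
    ∑ k ∈ m.divisors, (k : ℤ) * U (n / k) = (-1) ^ (m - 1) :=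
  explicit_solution_of_stratum_system_general n hn U hU m hm
end

section
/- For every integer g ≥ 2, all rationals a, b, c, and every integer n > 2g + 2, n! times the coefficient of t^n in f(t) equals (−1)^{n+1}·(2g−3+n)! / ((2g−3)!·4g(2g+1)(2g+2)). -/
/-!
For `n > 2g + 2` the polynomial part of `f` has no `tⁿ` coefficient, so only
`d (1 + t)^{-(2g-2)}` contributes, and `(1 + t)^{-(m+1)} = ∑ (-1)ⁿ C(m + n, m) tⁿ`.
-/

open PowerSeries

theorem PowerSeries.coeff_one_add_X_pow {R : Type*} [CommSemiring R] (k n : ℕ) :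
    coeff n ((1 + X : R⟦X⟧) ^ k) = k.choose n := by
  rw [← Polynomial.coeff_one_add_X_pow R k n, ← Polynomial.coeff_coe]
  simp

theorem PowerSeries.coeff_inv_one_add_X_pow_succ {K : Type*} [Field K] (m n : ℕ) :
    coeff n (((1 + X : K⟦X⟧) ^ (m + 1))⁻¹) = (-1) ^ n * (m + n).choose m := by
  have h : ((1 + X : K⟦X⟧) ^ (m + 1))⁻¹ = rescale (-1) (invOneSubPow K (m + 1)).val := by
    rw [PowerSeries.inv_eq_iff_mul_eq_one (by simp)]
    have hinv := (invOneSubPow K (m + 1)).val_inv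
    rw [invOneSubPow_inv_eq_one_sub_pow] at hinv
    rw [show (1 + X : K⟦X⟧) = rescale (-1) (1 - X) by simp [sub_eq_add_neg], ← map_pow,
      ← map_mul, hinv, map_one]
  rw [h, coeff_rescale, invOneSubPow_val_succ_eq_mk_add_choose, coeff_mk]

/-- for n > 2g+2, n!·[tⁿ]f equals
(−1)^{n+1}·(2g−3+n)!/((2g−3)!·4g(2g+1)(2g+2)), where f is the generating
function of Lemma 2. -/
theorem euler_char_Hgn_stable_range
    (g : ℕ) (hg : 2 ≤ g) (a b c d : ℚ)
    (hd : d = -1 / (4 * (g : ℚ) * (2 * g + 1) * (2 * g + 2)))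
    (f : PowerSeries ℚ)
    (hf : f = C d * ((1 + X) ^ (2 * g - 2))⁻¹ + C a + C b * (1 + X)
        + C c * (1 + X) ^ 2 + C b * (1 + X) ^ 3 + C a * (1 + X) ^ 4
        + C d * (1 + X) ^ (2 + 2 * g))
    (n : ℕ) (hn : 2 * g + 2 < n) :
    (n.factorial : ℚ) * coeff n f =
      (-1) ^ (n + 1) * ((2 * g - 3 + n).factorial : ℚ) /
        (((2 * g - 3).factorial : ℚ) * (4 * (g : ℚ) * (2 * g + 1) * (2 * g + 2))) := by
  have hcoeff : coeff n f = d * ((-1) ^ n * (2 * g - 3 + n).choose (2 * g - 3)) := by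
    rw [hf, show 2 * g - 2 = 2 * g - 3 + 1 by omega]
    simp only [map_add, coeff_C_mul, coeff_inv_one_add_X_pow_succ, coeff_one_add_X_pow, coeff_C,
      coeff_one, coeff_X, Nat.choose_eq_zero_of_lt (by omega : 2 < n),
      Nat.choose_eq_zero_of_lt (by omega : 3 < n), Nat.choose_eq_zero_of_lt (by omega : 4 < n),
      Nat.choose_eq_zero_of_lt (by omega : 2 + 2 * g < n), if_neg (by omega : n ≠ 0),
      if_neg (by omega : n ≠ 1)]
    push_cast
    ring
  rw [hcoeff, hd, Nat.cast_add_choose]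
  field_simp
  ring
end

section
/- For every integer g ≥ 2 and all rationals a, b, c, if the constant coefficient of f(t) equals 1 (equivalently, 2a + 2b + c + 2d = 1), then 3! times the coefficient of t³ in f equals 3·(2! times the coefficient of t² in f) − 6; that is, χ(H_{g,3}) = 3·χ(H_{g,2}) − 6 for the values read off from the generating function (4). -/
/-!
Writing `(1 + t) ^ r` for the binomial series, the functional `F ↦ [t³]F − [t²]F + [t⁰]F`
sends `(1 + t) ^ r` to `((r - 2)³ − 7 (r - 2)) / 6`, an odd function of `r − 2`. The exponents of
`f` come in pairs `2 ± n` (namely `2 ± 2g`, `2 ± 2`, `2 ± 1` and `2`) with equal coefficients, so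
the functional kills `f`, i.e. `[t³]f = [t²]f − [t⁰]f = [t²]f − 1`.
-/

open PowerSeries

namespace PowerSeries

variable {k : Type*} [Field k] [CharZero k]

lemma inv_one_add_X_pow_eq_binomialSeries (m : ℕ) :
    ((1 + X : k⟦X⟧) ^ m)⁻¹ = binomialSeries k (-m : k) := by
  rw [inv_eq_iff_mul_eq_one (by simp), ← binomialSeries_nat (R := k), ← binomialSeries_add,
    neg_add_cancel, binomialSeries_zero]

open Polynomial in
lemma coeff_binomialSeries_three_sub_two_add_zero (r : k) :
    coeff 3 (binomialSeries k r) - coeff 2 (binomialSeries k r) + coeff 0 (binomialSeries k r)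
      = ((r - 2) ^ 3 - 7 * (r - 2)) / 6 := by
  simp only [binomialSeries_coeff, smul_eq_mul, mul_one, Ring.choose_eq_smul,
    descPochhammer_succ_right, descPochhammer_zero, smeval_mul, smeval_X, smeval_sub,
    smeval_natCast, smeval_one, nsmul_eq_mul, pow_zero, pow_one, Nat.factorial]
  push_cast
  ring

lemma coeff_one_add_X_pow_three_sub_two_add_zero (n : ℕ) :
    coeff 3 ((1 + X : k⟦X⟧) ^ n) - coeff 2 ((1 + X : k⟦X⟧) ^ n) + coeff 0 ((1 + X : k⟦X⟧) ^ n)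
      = ((n - 2) ^ 3 - 7 * (n - 2)) / 6 := by
  rw [← binomialSeries_nat (R := k), coeff_binomialSeries_three_sub_two_add_zero]

lemma coeff_inv_one_add_X_pow_three_sub_two_add_zero (m : ℕ) :
    coeff 3 ((1 + X : k⟦X⟧) ^ m)⁻¹ - coeff 2 ((1 + X : k⟦X⟧) ^ m)⁻¹
        + coeff 0 ((1 + X : k⟦X⟧) ^ m)⁻¹
      = ((-m - 2) ^ 3 - 7 * (-m - 2)) / 6 := by
  rw [inv_one_add_X_pow_eq_binomialSeries, coeff_binomialSeries_three_sub_two_add_zero]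

end PowerSeries

theorem euler_char_Hg3_from_Hg2_general
    (g : ℕ) (hg : 2 ≤ g) (a b c d : ℚ)
    (f : PowerSeries ℚ)
    (hf : f = C d * ((1 + X) ^ (2 * g - 2))⁻¹ + C a + C b * (1 + X)
        + C c * (1 + X) ^ 2 + C b * (1 + X) ^ 3 + C a * (1 + X) ^ 4
        + C d * (1 + X) ^ (2 + 2 * g))
    (h0 : coeff 0 f = 1) :
    ((3).factorial : ℚ) * coeff 3 f = 3 * (((2).factorial : ℚ) * coeff 2 f) - 6 := by
  have hf' : f = C d * ((1 + X) ^ (2 * g - 2))⁻¹ + C a * (1 + X) ^ 0 + C b * (1 + X) ^ 1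
      + C c * (1 + X) ^ 2 + C b * (1 + X) ^ 3 + C a * (1 + X) ^ 4
      + C d * (1 + X) ^ (2 + 2 * g) := by
    rw [hf]; ring
  have hm : ((2 * g - 2 : ℕ) : ℚ) = 2 * g - 2 := by
    rw [Nat.cast_sub (by omega)]; push_cast; ring
  have key : coeff 3 f - coeff 2 f + coeff 0 f = 0 := by
    have hpow := coeff_one_add_X_pow_three_sub_two_add_zero (k := ℚ)
    rw [hf']
    simp only [map_add, coeff_C_mul]
    linear_combination (norm := skip)
      d * coeff_inv_one_add_X_pow_three_sub_two_add_zero (k := ℚ) (2 * g - 2)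
        + a * hpow 0 + b * hpow 1 + c * hpow 2 + b * hpow 3 + a * hpow 4 + d * hpow (2 + 2 * g)
    rw [hm]; push_cast; ring
  simp only [Nat.factorial]
  linear_combination 6 * key - 6 * h0

/-- if the constant coefficient of the generating function f of Lemma 2
equals 1 (i.e. 2a + 2b + c + 2d = 1), then 3!·[t³]f = 3·(2!·[t²]f) − 6, i.e.
χ(H_{g,3}) = 3·χ(H_{g,2}) − 6. -/
theorem euler_char_Hg3_from_Hg2
    (g : ℕ) (hg : 2 ≤ g) (a b c d : ℚ)
    (hd : d = -1 / (4 * (g : ℚ) * (2 * g + 1) * (2 * g + 2)))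
    (f : PowerSeries ℚ)
    (hf : f = C d * ((1 + X) ^ (2 * g - 2))⁻¹ + C a + C b * (1 + X)
        + C c * (1 + X) ^ 2 + C b * (1 + X) ^ 3 + C a * (1 + X) ^ 4
        + C d * (1 + X) ^ (2 + 2 * g))
    (h0 : coeff 0 f = 1) :
    ((3).factorial : ℚ) * coeff 3 f = 3 * (((2).factorial : ℚ) * coeff 2 f) - 6 :=
  euler_char_Hg3_from_Hg2_general g hg a b c d f hf h0
end
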